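/- Any finite or countable collection of pairwise non-overlapping axis-parallel rectangles contained in the triangle T = {(x_1,x_2) ∈ [0,1]² : x_2 ≤ x_1}, when any m of them are selected, has total area at most m/(2(m+1)). -/

import Mathlib

/-!
A rectangle `[a,b] × [c,d]` inside the triangle has `d ≤ a`, so its interior lies in the
corner piece `(a,1] × [0,a)`. The union of `m` such corner pieces is a staircase. Removing the
piece with the largest `a = A` leaves a staircase over `[0,A]`, so by induction on `m` (with the
side length as a parameter) the area is at most `A² (m-1) / (2m) + A (1 - A)`, which is maximal
at `A = m / (m+1)`, with value `m / (2(m+1))`.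
-/

open MeasureTheory Set
open scoped ENNReal Finset

def staircase {ι : Type*} (α : ι → ℝ) (s : Finset ι) (T : ℝ) : Set (ℝ × ℝ) :=
  ⋃ i ∈ s, Ioc (α i) T ×ˢ Ico 0 (α i)

section Staircase

variable {ι : Type*} (α : ι → ℝ)

lemma staircase_insert_subset [DecidableEq ι] {s : Finset ι} {j : ι} (T : ℝ)
    (hmax : ∀ i ∈ s, α i ≤ α j) :
    staircase α (insert j s) T ⊆ staircase α s (α j) ∪ Ioc (α j) T ×ˢ Ico 0 (α j) := by
  rintro ⟨x, y⟩ hxy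
  simp only [staircase, Finset.mem_insert, mem_iUnion, mem_prod, mem_Ioc, mem_Ico,
    exists_prop] at hxy
  obtain ⟨i, rfl | hi, ⟨hix, hxT⟩, hy, hyi⟩ := hxy
  · exact Or.inr ⟨⟨hix, hxT⟩, hy, hyi⟩
  by_cases hxj : x ≤ α j
  · exact Or.inl (mem_biUnion hi ⟨⟨hix, hxj⟩, hy, hyi⟩)
  · exact Or.inr ⟨⟨not_le.1 hxj, hxT⟩, hy, hyi.trans_le (hmax i hi)⟩

lemma staircase_subset_filter_mem_Icc (s : Finset ι) (T : ℝ) :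
    staircase α s T ⊆ staircase α (s.filter fun i => α i ∈ Icc 0 T) T := by
  simp only [staircase, iUnion_subset_iff]
  rintro i hi ⟨x, y⟩ ⟨⟨hix, hxT⟩, hy, hyi⟩
  exact mem_biUnion (Finset.mem_filter.2 ⟨hi, by linarith, by linarith⟩)
    ⟨⟨hix, hxT⟩, hy, hyi⟩

-- The right-hand side is the maximum of the left-hand side over `A`, attained at
-- `A = (n + 1) T / (n + 2)`.
lemma staircase_bound_step {n : ℝ} (hn : 0 ≤ n) (A T : ℝ) :
    A ^ 2 * n / (2 * (n + 1)) + A * (T - A) ≤ T ^ 2 * (n + 1) / (2 * (n + 1 + 1)) := by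
  rw [div_add' _ _ _ (by positivity), div_le_div_iff₀ (by positivity) (by positivity)]
  nlinarith [sq_nonneg ((n + 1) * T - (n + 2) * A), sq_nonneg (T - A)]

lemma volume_staircase_le_of_mem_Icc (s : Finset ι) (T : ℝ)
    (hα : ∀ i ∈ s, α i ∈ Icc 0 T) :
    volume (staircase α s T) ≤ ENNReal.ofReal (T ^ 2 * #s / (2 * (#s + 1))) := by
  classical
  induction s using Finset.induction_on_max_value α generalizing T with
  | empty => simp [staircase]
  | insert j s hj hmax ih =>
    obtain ⟨hA, hAT⟩ := hα j (Finset.mem_insert_self j s)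
    have ih' := ih (α j) fun i hi => ⟨(hα i (Finset.mem_insert_of_mem hi)).1, hmax i hi⟩
    have hcorner :
        volume (Ioc (α j) T ×ˢ Ico 0 (α j)) = ENNReal.ofReal (α j * (T - α j)) := by
      rw [Measure.volume_eq_prod, Measure.prod_prod, Real.volume_Ioc, Real.volume_Ico,
        sub_zero, mul_comm, ENNReal.ofReal_mul hA]
    calc volume (staircase α (insert j s) T)
        ≤ volume (staircase α s (α j)) + volume (Ioc (α j) T ×ˢ Ico 0 (α j)) :=
          (measure_mono (staircase_insert_subset α T hmax)).trans (measure_union_le _ _)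
      _ ≤ ENNReal.ofReal (α j ^ 2 * #s / (2 * (#s + 1)) + α j * (T - α j)) := by
          rw [hcorner, ENNReal.ofReal_add (by positivity) (by nlinarith)]
          gcongr
      _ ≤ ENNReal.ofReal (T ^ 2 * #(insert j s) / (2 * (#(insert j s) + 1))) := by
          rw [Finset.card_insert_of_notMem hj]
          push_cast
          exact ENNReal.ofReal_le_ofReal (staircase_bound_step (by positivity) _ _)

lemma volume_staircase_le (s : Finset ι) (T : ℝ) :
    volume (staircase α s T) ≤ ENNReal.ofReal (T ^ 2 * #s / (2 * (#s + 1))) := by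
  set t := s.filter fun i => α i ∈ Icc 0 T
  have hts : (#t : ℝ) ≤ #s := by exact_mod_cast Finset.card_filter_le s _
  calc volume (staircase α s T)
      ≤ volume (staircase α t T) := measure_mono (staircase_subset_filter_mem_Icc α s T)
    _ ≤ ENNReal.ofReal (T ^ 2 * #t / (2 * (#t + 1))) :=
        volume_staircase_le_of_mem_Icc α t T fun i hi => (Finset.mem_filter.1 hi).2
    _ ≤ ENNReal.ofReal (T ^ 2 * #s / (2 * (#s + 1))) := by
        gcongr ENNReal.ofReal ?_
        rw [div_le_div_iff₀ (by positivity) (by positivity)]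
        nlinarith [mul_le_mul_of_nonneg_left hts (sq_nonneg T)]

end Staircase

lemma interior_subset_of_subset_triangle {a b c d : ℝ}
    (h : Icc a b ×ˢ Icc c d ⊆
      {p : ℝ × ℝ | p.1 ∈ Icc (0 : ℝ) 1 ∧ p.2 ∈ Icc (0 : ℝ) 1 ∧ p.2 ≤ p.1}) :
    interior (Icc a b ×ˢ Icc c d) ⊆ Ioc a 1 ×ˢ Ico 0 a := by
  rw [interior_prod_eq, interior_Icc, interior_Icc]
  rintro ⟨x, y⟩ ⟨⟨hax, hxb⟩, hcy, hyd⟩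
  have hab : a ≤ b := (hax.trans hxb).le
  have hcd : c ≤ d := (hcy.trans hyd).le
  obtain ⟨-, -, hda⟩ :=
    h (show (a, d) ∈ Icc a b ×ˢ Icc c d from ⟨⟨le_rfl, hab⟩, hcd, le_rfl⟩)
  obtain ⟨⟨-, hb1⟩, ⟨hc0, -⟩, -⟩ :=
    h (show (b, c) ∈ Icc a b ×ˢ Icc c d from ⟨⟨hab, le_rfl⟩, le_rfl, hcd⟩)
  exact ⟨⟨hax, by linarith⟩, by linarith, by linarith⟩

theorem stmt8 (a b c d : ℕ → ℝ)
    (hsub : ∀ i, (Set.Icc (a i) (b i) ×ˢ Set.Icc (c i) (d i)) ⊆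
      {p : ℝ × ℝ | p.1 ∈ Set.Icc (0 : ℝ) 1 ∧ p.2 ∈ Set.Icc (0 : ℝ) 1 ∧ p.2 ≤ p.1})
    (hdisj : ∀ i j, i ≠ j →
      interior (Set.Icc (a i) (b i) ×ˢ Set.Icc (c i) (d i)) ∩
        interior (Set.Icc (a j) (b j) ×ˢ Set.Icc (c j) (d j)) = ∅)
    (m : ℕ) (s : Finset ℕ) (hs : s.card = m) :
    (∑ i ∈ s, volume (Set.Icc (a i) (b i) ×ˢ Set.Icc (c i) (d i))) ≤
      ENNReal.ofReal ((m : ℝ) / (2 * (m + 1))) := by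
  set R : ℕ → Set (ℝ × ℝ) := fun i => Icc (a i) (b i) ×ˢ Icc (c i) (d i)
  have hR : ∀ i, volume (interior (R i)) = volume (R i) := fun i =>
    measure_interior_of_null_frontier
      (((convex_Icc _ _).prod (convex_Icc _ _)).addHaar_frontier volume)
  calc ∑ i ∈ s, volume (R i)
      = volume (⋃ i ∈ s, interior (R i)) := by
        rw [measure_biUnion_finset (fun i _ j _ hij => disjoint_iff_inter_eq_empty.2
          (hdisj i j hij)) fun i _ => isOpen_interior.measurableSet]
        exact Finset.sum_congr rfl fun i _ => (hR i).symm
    _ ≤ volume (staircase a s 1) :=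
        measure_mono <| biUnion_mono subset_rfl fun i _ =>
          interior_subset_of_subset_triangle (hsub i)
    _ ≤ ENNReal.ofReal ((m : ℝ) / (2 * (m + 1))) := by
        simpa [hs] using volume_staircase_le a s 1
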